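/- A standard Tarskian consequence relation ⊢ on L is axiomatizable by a finite Set-Fmla Hilbert system if, and only if, there is no strictly increasing sequence ⊢_0 ⊊ ⊢_1 ⊊ ⊢_2 ⊊ … of standard Tarskian consequence relations on L such that ⊢ = sup_{i∈ω} ⊢_i. -/

import Mathlib

/-- Formulas over the signature Σ with unary ¬, ∘ and binary ∧, ∨, →,
freely generated from a denumerable set of propositional variables. -/
inductive Fm : Type where
  | var : ℕ → Fm
  | neg : Fm → Fm
  | circ : Fm → Fm
  | conj : Fm → Fm → Fm
  | disj : Fm → Fm → Fm
  | imp : Fm → Fm → Fm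
deriving DecidableEq

/-- Substitutions act homomorphically on formulas. -/
def subst (σ : ℕ → Fm) : Fm → Fm
  | .var n => σ n
  | .neg φ => .neg (subst σ φ)
  | .circ φ => .circ (subst σ φ)
  | .conj φ ψ => .conj (subst σ φ) (subst σ ψ)
  | .disj φ ψ => .disj (subst σ φ) (subst σ ψ)
  | .imp φ ψ => .imp (subst σ φ) (subst σ ψ)

/-- A Set-Fmla rule schema: a finite antecedent and a single succedent formula. -/
abbrev Rule : Type := Finset Fm × Fm

/-- Derivability in a Set-Fmla Hilbert system: `Derives H Γ φ` holds iff φ can be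
obtained from members of Γ by finitely many applications of substitution instances
of rules of `H`. -/
inductive Derives (H : Set Rule) : Set Fm → Fm → Prop where
  | prem : ∀ {Γ : Set Fm} {φ : Fm}, φ ∈ Γ → Derives H Γ φ
  | rule : ∀ {Γ : Set Fm} (r : Rule) (σ : ℕ → Fm), r ∈ H →
      (∀ ψ ∈ r.1, Derives H Γ (subst σ ψ)) → Derives H Γ (subst σ r.2)

/-- One-dimensional Set-Fmla consequence judgements. -/
abbrev ConsRel : Type := Set Fm → Fm → Prop

/-- A Tarskian consequence relation: reflexivity, monotonicity and cut. -/
def Tarskian (R : ConsRel) : Prop :=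
  (∀ (Γ : Set Fm) (φ : Fm), φ ∈ Γ → R Γ φ) ∧
  (∀ (Γ Γ' : Set Fm) (φ : Fm), Γ ⊆ Γ' → R Γ φ → R Γ' φ) ∧
  (∀ (Γ Δ : Set Fm) (φ : Fm), (∀ ψ ∈ Δ, R Γ ψ) → R (Γ ∪ Δ) φ → R Γ φ)

/-- Substitution-invariance. -/
def SubstInvariant (R : ConsRel) : Prop :=
  ∀ (σ : ℕ → Fm) (Γ : Set Fm) (φ : Fm), R Γ φ → R (subst σ '' Γ) (subst σ φ)

/-- Finitariness. -/
def Finitary (R : ConsRel) : Prop :=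
  ∀ (Γ : Set Fm) (φ : Fm), R Γ φ → ∃ Γ' ⊆ Γ, Γ'.Finite ∧ R Γ' φ

/-- Standard = Tarskian + substitution-invariant + finitary. -/
def StandardCR (R : ConsRel) : Prop := Tarskian R ∧ SubstInvariant R ∧ Finitary R

/-- Inclusion of consequence relations. -/
def leCR (R S : ConsRel) : Prop := ∀ (Γ : Set Fm) (φ : Fm), R Γ φ → S Γ φ

/-- `R` is the supremum of the collection `C` in the complete lattice of standard
Tarskian consequence relations: it is a standard upper bound below every
standard upper bound. -/
def IsSupCR (R : ConsRel) (C : Set ConsRel) : Prop :=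
  StandardCR R ∧ (∀ S ∈ C, leCR S R) ∧
  ∀ S : ConsRel, StandardCR S → (∀ T ∈ C, leCR T S) → leCR R S

/-!
Forward direction: a finite Hilbert system has finitely many rules, and each of them already
holds in some member of the chain, because the union of an increasing chain of standard
relations is itself standard, hence lies above the supremum. So `R` lies below a single member
of the chain, which forces the chain to stabilise there.

Backward direction: enumerate the finite-premise rules valid in `R` and build finite sets
`F 0 ⊆ F 1 ⊆ ⋯` of such rules, adding at step `n` the `n`-th rule together with a valid rule
not derivable from `F n`; one exists since `R` is not axiomatised by `F n`. The relations
`Derives (F n)` then increase strictly, and by finitariness of `R` their supremum is `R`.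
-/

def Fm.enc : Fm → ℕ
  | .var n => Nat.pair 0 n
  | .neg φ => Nat.pair 1 φ.enc
  | .circ φ => Nat.pair 2 φ.enc
  | .conj φ ψ => Nat.pair 3 (Nat.pair φ.enc ψ.enc)
  | .disj φ ψ => Nat.pair 4 (Nat.pair φ.enc ψ.enc)
  | .imp φ ψ => Nat.pair 5 (Nat.pair φ.enc ψ.enc)

theorem Fm.enc_injective : Function.Injective Fm.enc := by
  intro φ
  induction φ <;> intro ψ h <;> cases ψ <;>
    simp_all [Fm.enc, Nat.pair_eq_pair] <;> solve_by_elim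

instance : Countable Fm := ⟨⟨Fm.enc, Fm.enc_injective⟩⟩

theorem subst_var (φ : Fm) : subst Fm.var φ = φ := by
  induction φ <;> simp [subst, *]

theorem subst_subst (σ τ : ℕ → Fm) (φ : Fm) :
    subst σ (subst τ φ) = subst (fun n => subst σ (τ n)) φ := by
  induction φ <;> simp [subst, *]

theorem exists_forall_of_finite_of_monotone {α : Type*} {s : Set α} (hs : s.Finite)
    {P : ℕ → α → Prop} (hP : ∀ x, Monotone fun i => P i x) (h : ∀ x ∈ s, ∃ i, P i x) :
    ∃ N, ∀ x ∈ s, P N x := by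
  choose! idx hidx using h
  obtain ⟨N, hN⟩ := (hs.image idx).bddAbove
  exact ⟨N, fun x hx => hP x (hN ⟨x, hx, rfl⟩) (hidx x hx)⟩

theorem exists_finset_chain {α : Type*} {s : Set α} (hs : s.Countable)
    {Q : Finset α → α → Prop} (hQ : ∀ F : Finset α, ↑F ⊆ s → ∃ a ∈ s, Q F a) :
    ∃ F : ℕ → Finset α, (∀ n, ↑(F n) ⊆ s) ∧ Monotone F ∧ s ⊆ ⋃ n, ↑(F n) ∧
      ∀ n, ∃ a ∈ F (n + 1), Q (F n) a := by
  classical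
  obtain ⟨a₀, ha₀, -⟩ := hQ ∅ (by simp)
  obtain ⟨f, rfl⟩ := hs.exists_eq_range ⟨a₀, ha₀⟩
  choose g hg hgQ using fun F : {F : Finset α // ↑F ⊆ Set.range f} => hQ F.1 F.2
  let F : ℕ → {F : Finset α // ↑F ⊆ Set.range f} := fun n =>
    Nat.rec ⟨∅, by simp⟩ (fun n Fn => ⟨insert (g Fn) (insert (f n) Fn.1), by
      simpa [Set.insert_subset_iff] using ⟨hg Fn, Fn.2⟩⟩) n
  have hF_succ (n : ℕ) : (F (n + 1)).1 = insert (g (F n)) (insert (f n) (F n).1) := rfl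
  refine ⟨fun n => (F n).1, fun n => (F n).2, monotone_nat_of_le_succ fun n => ?_, ?_,
    fun n => ⟨g (F n), by simp [hF_succ], hgQ _⟩⟩
  · rw [hF_succ]
    exact (Finset.subset_insert _ _).trans (Finset.subset_insert _ _)
  · rintro _ ⟨n, rfl⟩
    exact Set.mem_iUnion.2 ⟨n + 1, by simp [hF_succ]⟩

theorem standardCR_iSup {seq : ℕ → ConsRel} (hstd : ∀ i, StandardCR (seq i))
    (hmono : Monotone seq) : StandardCR fun Γ φ => ∃ i, seq i Γ φ := by
  refine ⟨⟨fun Γ φ hφ => ⟨0, (hstd 0).1.1 Γ φ hφ⟩,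
    fun Γ Γ' φ hΓ ⟨i, hi⟩ => ⟨i, (hstd i).1.2.1 Γ Γ' φ hΓ hi⟩, ?_⟩,
    fun σ Γ φ ⟨i, hi⟩ => ⟨i, (hstd i).2.1 σ Γ φ hi⟩,
    fun Γ φ ⟨i, hi⟩ => ?_⟩
  · rintro Γ Δ φ hΔ ⟨i, hi⟩
    obtain ⟨Γ', hΓ', hfin, hi'⟩ := (hstd i).2.2 _ _ hi
    obtain ⟨N, hN⟩ := exists_forall_of_finite_of_monotone hfin.sdiff (P := fun j ψ => seq j Γ ψ)
      (fun ψ j k hjk => hmono hjk Γ ψ) fun ψ hψ => hΔ ψ ((hΓ' hψ.1).resolve_left hψ.2)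
    have hΓ'_sub : Γ' ⊆ Γ ∪ Γ' \ Γ := by
      rw [Set.union_sdiff_self]
      exact Set.subset_union_right
    exact ⟨max i N, (hstd _).1.2.2 Γ (Γ' \ Γ) φ
      (fun ψ hψ => hmono (le_max_right i N) Γ ψ (hN ψ hψ))
      ((hstd _).1.2.1 _ _ φ hΓ'_sub (hmono (le_max_left i N) _ φ hi'))⟩
  · obtain ⟨Γ', hΓ', hfin, hi'⟩ := (hstd i).2.2 Γ φ hi
    exact ⟨Γ', hΓ', hfin, i, hi'⟩

namespace Derives

variable {H H' : Set Rule} {Γ Γ' Δ : Set Fm} {φ : Fm}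

theorem mono (hH : H ⊆ H') (hΓ : Γ ⊆ Γ') (h : Derives H Γ φ) : Derives H' Γ' φ := by
  induction h with
  | prem hφ => exact .prem (hΓ hφ)
  | rule r σ hr _ ih => exact .rule r σ (hH hr) fun ψ hψ => ih ψ hψ

theorem trans (h : Derives H Δ φ) (hΔ : ∀ ψ ∈ Δ, Derives H Γ ψ) : Derives H Γ φ := by
  induction h with
  | prem hφ => exact hΔ _ hφ
  | rule r σ hr _ ih => exact .rule r σ hr fun ψ hψ => ih ψ hψ

theorem subst (σ : ℕ → Fm) (h : Derives H Γ φ) :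
    Derives H (_root_.subst σ '' Γ) (_root_.subst σ φ) := by
  induction h with
  | prem hφ => exact .prem ⟨_, hφ, rfl⟩
  | rule r τ hr _ ih =>
    rw [subst_subst]
    exact .rule r _ hr fun ψ hψ => subst_subst σ τ ψ ▸ ih ψ hψ

theorem of_mem {r : Rule} (hr : r ∈ H) : Derives H ↑r.1 r.2 := by
  simpa only [subst_var] using
    Derives.rule (Γ := ↑r.1) r Fm.var hr fun ψ hψ => (subst_var ψ).symm ▸ .prem hψ

theorem exists_finite (h : Derives H Γ φ) : ∃ Γ₀ ⊆ Γ, Γ₀.Finite ∧ Derives H Γ₀ φ := by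
  induction h with
  | prem hφ =>
    exact ⟨{_}, Set.singleton_subset_iff.2 hφ, Set.finite_singleton _, .prem rfl⟩
  | rule r σ hr _ ih =>
    choose! Γ₀ hΓ₀ hfin hd using ih
    refine ⟨⋃ ψ ∈ (↑r.1 : Set Fm), Γ₀ ψ, Set.iUnion₂_subset hΓ₀,
      r.1.finite_toSet.biUnion hfin, .rule r σ hr fun ψ hψ => ?_⟩
    exact (hd ψ hψ).mono subset_rfl (Set.subset_biUnion_of_mem (u := Γ₀) (Finset.mem_coe.2 hψ))

theorem leCR_of_forall_rule {S : ConsRel} (hS : Tarskian S) (hσ : SubstInvariant S)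
    (h : ∀ r ∈ H, S ↑r.1 r.2) : leCR (Derives H) S := by
  obtain ⟨hrefl, hmono, hcut⟩ := hS
  intro Γ φ hd
  induction hd with
  | prem hφ => exact hrefl _ _ hφ
  | rule r σ hr _ ih =>
    refine hcut _ (_root_.subst σ '' ↑r.1) _ ?_
      (hmono _ _ _ Set.subset_union_right (hσ σ _ _ (h r hr)))
    rintro _ ⟨ψ, hψ, rfl⟩
    exact ih ψ hψ

end Derives

theorem standardCR_derives (H : Set Rule) : StandardCR (Derives H) :=
  ⟨⟨fun _ _ => .prem, fun _ _ _ hΓ h => h.mono subset_rfl hΓ,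
    fun _ _ _ hΔ h => h.trans fun ψ hψ => hψ.elim .prem (hΔ ψ)⟩,
    fun σ _ _ h => h.subst σ, fun _ _ h => h.exists_finite⟩

def FinitelyAxiomatizable (R : ConsRel) : Prop :=
  ∃ H : Set Rule, H.Finite ∧ ∀ (Γ : Set Fm) (φ : Fm), Derives H Γ φ ↔ R Γ φ

def rulesOf (R : ConsRel) : Set Rule := {r | R ↑r.1 r.2}

theorem Finitary.leCR_of_forall_rulesOf {R S : ConsRel} (hR : Finitary R) (hS : Tarskian S)
    (h : ∀ r ∈ rulesOf R, S ↑r.1 r.2) : leCR R S := by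
  intro Γ φ hφ
  obtain ⟨Γ₀, hΓ₀, hfin, hφ₀⟩ := hR Γ φ hφ
  have hS₀ : S Γ₀ φ := by
    simpa using h (hfin.toFinset, φ) (by simpa [rulesOf] using hφ₀)
  exact hS.2.1 _ _ _ hΓ₀ hS₀

theorem FinitelyAxiomatizable.exists_leCR_of_isSupCR {R : ConsRel} (hR : FinitelyAxiomatizable R)
    {seq : ℕ → ConsRel} (hstd : ∀ i, StandardCR (seq i)) (hmono : Monotone seq)
    (hsup : IsSupCR R {S | ∃ i, S = seq i}) : ∃ N, leCR R (seq N) := by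
  obtain ⟨H, hH, hHR⟩ := hR
  have hRU : leCR R fun Γ φ => ∃ i, seq i Γ φ :=
    hsup.2.2 _ (standardCR_iSup hstd hmono) (by rintro _ ⟨i, rfl⟩ Γ φ h; exact ⟨i, h⟩)
  obtain ⟨N, hN⟩ := exists_forall_of_finite_of_monotone hH (P := fun i r => seq i ↑r.1 r.2)
    (fun r i j hij => hmono hij _ _) fun r hr => hRU _ _ ((hHR _ _).1 (.of_mem hr))
  exact ⟨N, fun Γ φ h => Derives.leCR_of_forall_rule (hstd N).1 (hstd N).2.1 hN Γ φ
    ((hHR Γ φ).2 h)⟩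

theorem exists_rulesOf_not_derives {R : ConsRel} (hR : StandardCR R)
    (hR' : ¬ FinitelyAxiomatizable R) (F : Finset Rule) (hF : ↑F ⊆ rulesOf R) :
    ∃ r ∈ rulesOf R, ¬ Derives ↑F ↑r.1 r.2 := by
  by_contra! h
  exact hR' ⟨F, F.finite_toSet, fun Γ φ =>
    ⟨Derives.leCR_of_forall_rule hR.1 hR.2.1 hF Γ φ,
      hR.2.2.leCR_of_forall_rulesOf (standardCR_derives _).1 h Γ φ⟩⟩

theorem exists_strictChain_isSupCR {R : ConsRel} (hR : StandardCR R)
    (hR' : ¬ FinitelyAxiomatizable R) :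
    ∃ seq : ℕ → ConsRel, (∀ i, StandardCR (seq i)) ∧
      (∀ i, leCR (seq i) (seq (i + 1)) ∧ seq i ≠ seq (i + 1)) ∧
      IsSupCR R {S | ∃ i, S = seq i} := by
  obtain ⟨F, hFR, hFmono, hcover, hnew⟩ :=
    exists_finset_chain (Set.to_countable (rulesOf R)) (exists_rulesOf_not_derives hR hR')
  refine ⟨fun n => Derives ↑(F n), fun n => standardCR_derives _, fun n => ⟨?_, ?_⟩, hR, ?_, ?_⟩
  · exact fun Γ φ => Derives.mono (Finset.coe_subset.2 (hFmono n.le_succ)) subset_rfl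
  · obtain ⟨r, hr, hnot⟩ := hnew n
    intro heq
    exact hnot ((congrFun₂ heq _ _).mpr (.of_mem hr))
  · rintro _ ⟨n, rfl⟩
    exact Derives.leCR_of_forall_rule hR.1 hR.2.1 (hFR n)
  · intro S hS hub
    refine hR.2.2.leCR_of_forall_rulesOf hS.1 fun r hr => ?_
    obtain ⟨n, hn⟩ := Set.mem_iUnion.1 (hcover hr)
    exact hub _ ⟨n, rfl⟩ _ _ (Derives.of_mem hn)

/-- Wójcicki: a standard Tarskian consequence relation is
axiomatizable by a finite Set-Fmla Hilbert system iff there is no strictly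
increasing sequence of standard Tarskian consequence relations whose supremum
it is. -/
theorem stmt0 (R : ConsRel) (hR : StandardCR R) :
    (∃ H : Set Rule, H.Finite ∧ ∀ (Γ : Set Fm) (φ : Fm), Derives H Γ φ ↔ R Γ φ) ↔
      ¬ ∃ seq : ℕ → ConsRel,
          (∀ i : ℕ, StandardCR (seq i)) ∧
          (∀ i : ℕ, leCR (seq i) (seq (i + 1)) ∧ seq i ≠ seq (i + 1)) ∧
          IsSupCR R {S : ConsRel | ∃ i : ℕ, S = seq i} := by
  refine ⟨fun hfin ⟨seq, hstd, hchain, hsup⟩ => ?_,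
    fun h => not_not.1 fun hnfin => h (exists_strictChain_isSupCR hR hnfin)⟩
  obtain ⟨N, hN⟩ := FinitelyAxiomatizable.exists_leCR_of_isSupCR hfin hstd
    (monotone_nat_of_le_succ fun i => (hchain i).1) hsup
  have hsucc_le : leCR (seq (N + 1)) (seq N) :=
    fun Γ φ h => hN Γ φ (hsup.2.1 _ ⟨N + 1, rfl⟩ Γ φ h)
  exact (hchain N).2 (le_antisymm (hchain N).1 hsucc_le)
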